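/- arXiv:2404.17321 — 3 statements merged into one kernel-verified Lean document; each statement's English description precedes it below -/
import Mathlib

section
/- Let l > 0, m > 0, τ > 0 be real numbers, let α be a real number with 0 < α ≤ 1, and let v > 0 be real satisfying l²·v^{2α} + τ²·v^{4α} + 2·l·τ·v^{3α}·cos(απ/2) = m². Then there exists a real number τ* > 0 such that (τ/l)·(iv)^{2α} + (iv)^α + (m/l)·exp(−i·v·τ*) = 0 (principal-branch complex powers). -/
/-!
Since `(iv)^c = v^c e^{icπ/2}`, the first two terms of the characteristic equation form
`z = e^{iφ} v^α ((τ/l) v^α e^{iφ} + 1)` with `φ = απ/2`, and equation (4.7) says exactly that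
`|z| = m/l`. Hence `-(l/m) z` lies on the unit circle, and every point `e^{iθ}` of it, with
`θ = arg ∈ (-π, π]`, is `e^{-ivτ*}` for `τ* = (2π - θ)/v > 0`.
-/

open Complex
open scoped Real

theorem I_mul_ofReal_cpow_ofReal {v : ℝ} (hv : 0 < v) (c : ℝ) :
    (I * v) ^ (c : ℂ) = ((v ^ c : ℝ) : ℂ) * exp ((c * π / 2 : ℝ) * I) := by
  have hlog : log (I * v) = Real.log v + π / 2 * I := by
    rw [log_mul_ofReal v hv I I_ne_zero, log_I]
  rw [cpow_def_of_ne_zero (mul_ne_zero I_ne_zero (ofReal_ne_zero.2 hv.ne')), hlog,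
    Real.rpow_def_of_pos hv, ofReal_exp, ← exp_add]
  push_cast
  ring_nf

theorem sq_norm_mul_exp_two_mul_add_mul_exp (A B φ : ℝ) :
    ‖A * exp ((2 * φ : ℝ) * I) + B * exp (φ * I)‖ ^ 2
      = A ^ 2 + B ^ 2 + 2 * A * B * Real.cos φ := by
  have hfactor : (A : ℂ) * exp ((2 * φ : ℝ) * I) + B * exp (φ * I)
      = exp (φ * I) * (A * exp (φ * I) + B) := by
    rw [show ((2 * φ : ℝ) : ℂ) * I = φ * I + φ * I by push_cast; ring, exp_add]
    ring
  rw [hfactor, norm_mul, norm_exp_ofReal_mul_I, one_mul, ← normSq_eq_norm_sq, normSq_add]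
  simp only [normSq_apply, mul_re, mul_im, ofReal_re, ofReal_im, exp_ofReal_mul_I_re,
    exp_ofReal_mul_I_im, conj_ofReal, zero_mul, sub_zero, add_zero, mul_zero]
  linear_combination A ^ 2 * Real.sin_sq_add_cos_sq φ

theorem exists_pos_exp_neg_I_mul_eq {v : ℝ} (hv : 0 < v) {w : ℂ} (hw : ‖w‖ = 1) :
    ∃ t : ℝ, 0 < t ∧ exp (-(I * v * t)) = w := by
  refine ⟨(2 * π - arg w) / v, div_pos (by linarith [arg_le_pi w, Real.pi_pos]) hv, ?_⟩
  have hexponent : -(I * v * ((2 * π - arg w) / v : ℝ)) = arg w * I - 2 * π * I := by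
    have hv' : (v : ℂ) ≠ 0 := ofReal_ne_zero.2 hv.ne'
    push_cast
    field_simp
    ring
  rw [hexponent, exp_sub, exp_two_pi_mul_I, div_one]
  simpa [hw] using norm_mul_exp_arg_mul_I w

theorem exists_critical_delay_general
    (l m τ α v : ℝ) (hl : 0 < l) (hm : 0 < m) (hv : 0 < v)
    (h47 : l ^ 2 * v ^ (2 * α) + τ ^ 2 * v ^ (4 * α)
      + 2 * l * τ * v ^ (3 * α) * Real.cos (α * Real.pi / 2) = m ^ 2) :
    ∃ τs : ℝ, 0 < τs ∧
      ((τ / l : ℝ) : ℂ) * (Complex.I * (v : ℂ)) ^ ((2 * α : ℝ) : ℂ)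
        + (Complex.I * (v : ℂ)) ^ ((α : ℝ) : ℂ)
        + ((m / l : ℝ) : ℂ) * Complex.exp (-(Complex.I * (v : ℂ) * (τs : ℂ))) = 0 := by
  set z : ℂ := ((τ / l : ℝ) : ℂ) * (I * v) ^ ((2 * α : ℝ) : ℂ) + (I * v) ^ ((α : ℝ) : ℂ)
  have hz : ‖z‖ = m / l := by
    refine (sq_eq_sq₀ (norm_nonneg z) (by positivity)).1 ?_
    have hpow (n : ℕ) : v ^ (n * α) = (v ^ α) ^ n := by
      rw [mul_comm, Real.rpow_mul_natCast hv.le]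
    have h2 : v ^ (2 * α) = (v ^ α) ^ 2 := by exact_mod_cast hpow 2
    have h3 : v ^ (3 * α) = (v ^ α) ^ 3 := by exact_mod_cast hpow 3
    have h4 : v ^ (4 * α) = (v ^ α) ^ 4 := by exact_mod_cast hpow 4
    have hz' : z = ((τ / l * v ^ (2 * α) : ℝ) : ℂ) * exp ((2 * (α * π / 2) : ℝ) * I)
        + ((v ^ α : ℝ) : ℂ) * exp ((α * π / 2 : ℝ) * I) := by
      simp only [z, I_mul_ofReal_cpow_ofReal hv]
      push_cast
      ring_nf
    rw [h2, h3, h4] at h47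
    rw [hz', sq_norm_mul_exp_two_mul_add_mul_exp, h2]
    field_simp
    linear_combination h47
  obtain ⟨t, ht, hexp⟩ := exists_pos_exp_neg_I_mul_eq hv (w := -z / ((m / l : ℝ) : ℂ))
    (by rw [norm_div, norm_neg, hz, norm_real, Real.norm_of_nonneg (by positivity),
      div_self (by positivity)])
  refine ⟨t, ht, ?_⟩
  rw [hexp, mul_div_cancel₀ _ (ofReal_ne_zero.2 (by positivity))]
  ring

/-- If `v > 0` satisfies equation (4.7), then there exists a critical delay `τ* > 0`
such that `iv` is a root of the characteristic equation with the delay in the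
exponential replaced by `τ*`:
`(τ/l)(iv)^{2α} + (iv)^α + (m/l)e^{−ivτ*} = 0`. -/
theorem exists_critical_delay
    (l m τ α v : ℝ) (hl : 0 < l) (hm : 0 < m) (hτ : 0 < τ)
    (hα0 : 0 < α) (hα1 : α ≤ 1) (hv : 0 < v)
    (h47 : l ^ 2 * v ^ (2 * α) + τ ^ 2 * v ^ (4 * α)
      + 2 * l * τ * v ^ (3 * α) * Real.cos (α * Real.pi / 2) = m ^ 2) :
    ∃ τs : ℝ, 0 < τs ∧
      ((τ / l : ℝ) : ℂ) * (Complex.I * (v : ℂ)) ^ ((2 * α : ℝ) : ℂ)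
        + (Complex.I * (v : ℂ)) ^ ((α : ℝ) : ℂ)
        + ((m / l : ℝ) : ℂ) * Complex.exp (-(Complex.I * (v : ℂ) * (τs : ℂ))) = 0 :=
  exists_critical_delay_general l m τ α v hl hm hv h47
end

section
/- Let l > 0, m > 0, τ > 0 be real numbers and let α be a real number with 0 < α ≤ 1. Then there exists at most one real v > 0 such that iv is a root of the characteristic equation (τ/l)·(iv)^{2α} + (iv)^α + (m/l)·exp(−i·v·τ) = 0 (principal-branch complex powers). -/
/-!
With `w = (iv)^α = v^α e^{iαπ/2}` one has `(iv)^{2α} = w²`, so a root `iv` satisfies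
`w (1 + (τ/l) w) = -(m/l) e^{-ivτ}`. Taking moduli gives the paper's equation (4.7) in the form
`v^α ‖1 + (τ/l) v^α e^{iαπ/2}‖ = m/l`. Because `cos(απ/2) ≥ 0`, the point `1 + r e^{iαπ/2}`
moves away from the origin as `r ≥ 0` grows, so the left side is strictly increasing in `v`.
-/

open Complex

lemma I_mul_ofReal_cpow {v : ℝ} (hv : 0 < v) (c : ℂ) :
    (I * v) ^ c = (v : ℂ) ^ c * I ^ c := by
  rw [cpow_def_of_ne_zero (by simp [hv.ne']), log_mul_ofReal v hv I I_ne_zero, add_mul,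
    Complex.exp_add, cpow_def_of_ne_zero (by simp [hv.ne']), cpow_def_of_ne_zero I_ne_zero,
    ofReal_log hv.le]

lemma re_I_cpow_nonneg {α : ℝ} (hα0 : -1 ≤ α) (hα1 : α ≤ 1) : 0 ≤ (I ^ (α : ℂ)).re := by
  rw [cpow_def_of_ne_zero I_ne_zero, log_I,
    show ↑Real.pi / 2 * I * α = ((α * (Real.pi / 2) : ℝ) : ℂ) * I by push_cast; ring,
    exp_ofReal_mul_I_re]
  apply Real.cos_nonneg_of_mem_Icc
  constructor <;> nlinarith [Real.pi_pos]

lemma norm_one_add_ofReal_mul_le {u : ℂ} (hu : 0 ≤ u.re) {s t : ℝ} (hs : 0 ≤ s) (hst : s ≤ t) :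
    ‖1 + s * u‖ ≤ ‖1 + t * u‖ := by
  rw [← sq_le_sq₀ (norm_nonneg _) (norm_nonneg _), Complex.sq_norm, Complex.sq_norm,
    normSq_apply, normSq_apply]
  simp only [add_re, one_re, re_ofReal_mul, add_im, one_im, im_ofReal_mul, zero_add]
  nlinarith [mul_le_mul hst hst hs (hs.trans hst), mul_le_mul_of_nonneg_right hst hu,
    mul_self_nonneg u.re, mul_self_nonneg u.im]

lemma strictMonoOn_mul_norm_one_add_ofReal_mul {u : ℂ} (hu : 0 ≤ u.re) :
    StrictMonoOn (fun r : ℝ => r * ‖1 + r * u‖) (Set.Ici 0) := by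
  intro s (hs : 0 ≤ s) t ht hst
  have one_le : 1 ≤ ‖1 + t * u‖ := by
    simpa using norm_one_add_ofReal_mul_le hu le_rfl ht
  calc s * ‖1 + s * u‖ ≤ s * ‖1 + t * u‖ := by
        gcongr; exact norm_one_add_ofReal_mul_le hu hs hst.le
    _ < t * ‖1 + t * u‖ := by gcongr

/-- The characteristic function of the fractional sunflower equation linearized at `x* = 2nπ`. -/
noncomputable def sunflowerCharFun (l m τ α : ℝ) (z : ℂ) : ℂ :=
  ((τ / l : ℝ) : ℂ) * z ^ ((2 * α : ℝ) : ℂ) + z ^ ((α : ℝ) : ℂ)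
    + ((m / l : ℝ) : ℂ) * exp (-(z * (τ : ℂ)))

lemma rpow_mul_norm_eq_of_sunflowerCharFun_eq_zero {l m τ α v : ℝ} (hv : 0 < v)
    (h : sunflowerCharFun l m τ α (I * v) = 0) :
    v ^ α * ‖1 + ((v ^ α : ℝ) : ℂ) * (((τ / l : ℝ) : ℂ) * I ^ (α : ℂ))‖ = |m / l| := by
  have hw : (I * v) ^ (α : ℂ) = ((v ^ α : ℝ) : ℂ) * I ^ (α : ℂ) := by
    rw [I_mul_ofReal_cpow hv, ofReal_cpow hv.le]
  have hsq : (I * v) ^ ((2 * α : ℝ) : ℂ) = ((I * v) ^ (α : ℂ)) ^ 2 := by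
    rw [ofReal_mul, ofReal_ofNat, ← cpow_nat_mul]
    norm_num
  have hfac : ((v ^ α : ℝ) : ℂ) * I ^ (α : ℂ)
        * (1 + ((v ^ α : ℝ) : ℂ) * (((τ / l : ℝ) : ℂ) * I ^ (α : ℂ)))
      = -(((m / l : ℝ) : ℂ) * exp (-(I * v * τ))) := by
    rw [sunflowerCharFun, hsq, hw] at h
    linear_combination h
  have hexp : ‖exp (-(I * v * τ))‖ = 1 := by
    rw [show -(I * v * τ) = ((-(v * τ) : ℝ) : ℂ) * I by push_cast; ring, norm_exp_ofReal_mul_I]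
  have hpow : ‖((v ^ α : ℝ) : ℂ) * I ^ (α : ℂ)‖ = v ^ α := by
    rw [norm_mul, norm_cpow_real, norm_I, Real.one_rpow, mul_one, Complex.norm_real,
      Real.norm_of_nonneg (Real.rpow_nonneg hv.le α)]
  have := congrArg (‖·‖) hfac
  rwa [norm_mul, hpow, norm_neg, norm_mul, hexp, mul_one, Complex.norm_real,
    Real.norm_eq_abs] at this

theorem at_most_one_imaginary_crossing_general
    (l m τ α : ℝ) (hl : 0 < l) (hτ : 0 < τ)
    (hα0 : 0 < α) (hα1 : α ≤ 1) :
    ∀ v₁ v₂ : ℝ, 0 < v₁ → 0 < v₂ →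
      ((τ / l : ℝ) : ℂ) * (Complex.I * (v₁ : ℂ)) ^ ((2 * α : ℝ) : ℂ)
        + (Complex.I * (v₁ : ℂ)) ^ ((α : ℝ) : ℂ)
        + ((m / l : ℝ) : ℂ) * Complex.exp (-(Complex.I * (v₁ : ℂ) * (τ : ℂ))) = 0 →
      ((τ / l : ℝ) : ℂ) * (Complex.I * (v₂ : ℂ)) ^ ((2 * α : ℝ) : ℂ)
        + (Complex.I * (v₂ : ℂ)) ^ ((α : ℝ) : ℂ)
        + ((m / l : ℝ) : ℂ) * Complex.exp (-(Complex.I * (v₂ : ℂ) * (τ : ℂ))) = 0 →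
      v₁ = v₂ := by
  intro v₁ v₂ hv₁ hv₂ h₁ h₂
  have hu : 0 ≤ (((τ / l : ℝ) : ℂ) * I ^ (α : ℂ)).re := by
    rw [re_ofReal_mul]
    exact mul_nonneg (div_pos hτ hl).le (re_I_cpow_nonneg (by linarith) hα1)
  have hmono := (strictMonoOn_mul_norm_one_add_ofReal_mul hu).comp
    (Real.strictMonoOn_rpow_Ici_of_exponent_pos hα0)
    (fun v (hv : 0 ≤ v) => Real.rpow_nonneg hv α)
  exact hmono.injOn hv₁.le hv₂.le <|
    (rpow_mul_norm_eq_of_sunflowerCharFun_eq_zero hv₁ h₁).trans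
      (rpow_mul_norm_eq_of_sunflowerCharFun_eq_zero hv₂ h₂).symm

/-- For positive parameters `l, m, τ` and `0 < α ≤ 1`, there is at most one `v > 0`
such that `iv` is a root of the characteristic equation
`(τ/l)λ^{2α} + λ^α + (m/l)e^{−λτ} = 0` (principal-branch complex powers). -/
theorem at_most_one_imaginary_crossing
    (l m τ α : ℝ) (hl : 0 < l) (hm : 0 < m) (hτ : 0 < τ)
    (hα0 : 0 < α) (hα1 : α ≤ 1) :
    ∀ v₁ v₂ : ℝ, 0 < v₁ → 0 < v₂ →
      ((τ / l : ℝ) : ℂ) * (Complex.I * (v₁ : ℂ)) ^ ((2 * α : ℝ) : ℂ)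
        + (Complex.I * (v₁ : ℂ)) ^ ((α : ℝ) : ℂ)
        + ((m / l : ℝ) : ℂ) * Complex.exp (-(Complex.I * (v₁ : ℂ) * (τ : ℂ))) = 0 →
      ((τ / l : ℝ) : ℂ) * (Complex.I * (v₂ : ℂ)) ^ ((2 * α : ℝ) : ℂ)
        + (Complex.I * (v₂ : ℂ)) ^ ((α : ℝ) : ℂ)
        + ((m / l : ℝ) : ℂ) * Complex.exp (-(Complex.I * (v₂ : ℂ) * (τ : ℂ))) = 0 →
      v₁ = v₂ :=
  at_most_one_imaginary_crossing_general l m τ α hl hτ hα0 hα1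
end

section
/- Let l > 0 and m > 0 be real numbers, let τ ≥ 0 be real, and let α be a real number with 0 < α ≤ 1. Then there exists a real number λ > 0 such that (τ/l)·λ^{2α} + λ^{α} = (m/l)·exp(−λ·τ), where λ^β denotes the real power. Consequently the characteristic equation (τ/l)λ^{2α} + λ^α − (m/l)e^{−λτ} = 0 of the linearization near the equilibria x* = (2n+1)π always has a positive real root. -/
/-!
The gap `a λ^{2α} + λ^α − c e^{−λτ}` is continuous on `[0, ∞)` and equals `−c < 0` at `λ = 0`.
At `λ = c^{1/α}` the middle term alone is `c`, which already dominates `c e^{−λτ}` because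
`λτ ≥ 0`; so the gap changes sign on `(0, c^{1/α}]` and the intermediate value theorem gives
a positive root.
-/

open Real Set

namespace CharacteristicEquation

noncomputable def gap (a c τ α x : ℝ) : ℝ :=
  a * x ^ (2 * α) + x ^ α - c * exp (-(x * τ))

variable {a c τ α : ℝ}

theorem continuous_gap (hα : 0 < α) : Continuous (gap a c τ α) := by
  have h2α : Continuous fun x : ℝ => x ^ (2 * α) := continuous_rpow_const (by positivity)
  have hα' : Continuous fun x : ℝ => x ^ α := continuous_rpow_const hα.le
  unfold gap
  fun_prop

theorem gap_zero (hα : 0 < α) : gap a c τ α 0 = -c := by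
  simp [gap, zero_rpow hα.ne', zero_rpow (mul_pos two_pos hα).ne']

theorem gap_rpow_inv_nonneg (ha : 0 ≤ a) (hc : 0 < c) (hτ : 0 ≤ τ) (hα : 0 < α) :
    0 ≤ gap a c τ α (c ^ α⁻¹) := by
  set b := c ^ α⁻¹
  have hb : 0 ≤ b := rpow_nonneg hc.le _
  have hbα : b ^ α = c := rpow_inv_rpow hc.le hα.ne'
  have hexp : c * exp (-(b * τ)) ≤ c :=
    mul_le_of_le_one_right hc.le (exp_le_one_iff.2 (neg_nonpos.2 (mul_nonneg hb hτ)))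
  have hquad : 0 ≤ a * b ^ (2 * α) := mul_nonneg ha (rpow_nonneg hb _)
  rw [gap, hbα]
  linarith

theorem exists_pos_gap_eq_zero (ha : 0 ≤ a) (hc : 0 < c) (hτ : 0 ≤ τ) (hα : 0 < α) :
    ∃ x, 0 < x ∧ gap a c τ α x = 0 := by
  have hsign : (0 : ℝ) ∈ Ioc (gap a c τ α 0) (gap a c τ α (c ^ α⁻¹)) :=
    ⟨by rw [gap_zero hα]; exact neg_neg_of_pos hc, gap_rpow_inv_nonneg ha hc hτ hα⟩
  obtain ⟨x, hx, hx0⟩ := intermediate_value_Ioc (rpow_nonneg hc.le _)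
    (continuous_gap hα).continuousOn hsign
  exact ⟨x, hx.1, hx0⟩

end CharacteristicEquation

open CharacteristicEquation in
theorem exists_positive_real_root_odd_equilibria_general
    (l m τ α : ℝ) (hl : 0 < l) (hm : 0 < m) (hτ : 0 ≤ τ)
    (hα0 : 0 < α) :
    ∃ x : ℝ, 0 < x ∧
      τ / l * x ^ (2 * α) + x ^ α = m / l * Real.exp (-(x * τ)) := by
  obtain ⟨x, hx, hroot⟩ :=
    exists_pos_gap_eq_zero (div_nonneg hτ hl.le) (div_pos hm hl) hτ hα0
  exact ⟨x, hx, sub_eq_zero.1 hroot⟩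

/-- For any delay `τ ≥ 0`, the characteristic equation
`(τ/l)λ^{2α} + λ^α − (m/l)e^{−λτ} = 0` of the linearization near the equilibria
`x* = (2n+1)π` has a positive real root (real powers). -/
theorem exists_positive_real_root_odd_equilibria
    (l m τ α : ℝ) (hl : 0 < l) (hm : 0 < m) (hτ : 0 ≤ τ)
    (hα0 : 0 < α) (hα1 : α ≤ 1) :
    ∃ x : ℝ, 0 < x ∧
      τ / l * x ^ (2 * α) + x ^ α = m / l * Real.exp (-(x * τ)) :=
  exists_positive_real_root_odd_equilibria_general l m τ α hl hm hτ hα0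
end
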